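/- Let A ∈ M_n(ℂ), λ ∈ ℂ, and let D = diag(d₁,…,d_m) be a real diagonal m×m matrix. Suppose Π : ℝ → M_{n×m}(ℂ) is differentiable and satisfies Π′(x) = −i A Π(x) D. Then P(x) := Π(x) e^{iλxD} satisfies P′(x) = −i (A − λ I_n) P(x) D. Consequently, if (A − λ I_n)ⁿ = 0, then every entry of P(x) is a polynomial in x of degree less than n. -/

import Mathlib

open Matrix Polynomial

/-!
With `P = Π e^{iλxD}`, the product rule gives `P' = -iAΠDe^{iλxD} + iλ P D`, and since the
diagonal matrices `D` and `e^{iλxD}` commute this is `-i(A - λI)PD`.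

For the polynomial claim put `N = A - λI`. The derivative of `N^k P D^k` is
`-i N^{k+1} P D^{k+1}`, so by downward induction on `k`, starting from `N^n = 0`, the entries of
`N^k P D^k` are polynomials of degree `< n - k`: each step integrates a polynomial once.
-/

namespace Polynomial

variable {K : Type*} [Field K]

noncomputable def antiderivative (q : K[X]) : K[X] :=
  q.sum fun k a => C (a / (k + 1)) * X ^ (k + 1)

@[simp]
theorem derivative_antiderivative [CharZero K] (q : K[X]) :
    derivative (antiderivative q) = q := by
  rw [antiderivative, Polynomial.sum_def, derivative_sum]
  conv_rhs => rw [← q.sum_C_mul_X_pow_eq, Polynomial.sum_def]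
  refine Finset.sum_congr rfl fun k _ => ?_
  rw [derivative_C_mul, derivative_X_pow, ← mul_assoc, ← C_mul, Nat.cast_add_one,
    add_tsub_cancel_right, div_mul_cancel₀ _ (Nat.cast_add_one_ne_zero k)]

theorem degree_antiderivative_lt {q : K[X]} {t : ℕ} (hq : q.degree < t) :
    (antiderivative q).degree < ↑(t + 1) := by
  refine (degree_sum_le _ _).trans_lt ((Finset.sup_lt_iff (WithBot.bot_lt_coe _)).2 ?_)
  intro k hk
  have hkt : k < t := by exact_mod_cast (le_degree_of_mem_supp k hk).trans_lt hq
  exact (degree_C_mul_X_pow_le _ _).trans_lt (by exact_mod_cast Nat.succ_lt_succ hkt)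

end Polynomial

theorem exists_polynomial_eq_of_hasDerivAt {f : ℝ → ℂ} {q : ℂ[X]} {t : ℕ}
    (hq : q.degree < t) (hf : ∀ x : ℝ, HasDerivAt f (q.eval (x : ℂ)) x) :
    ∃ p : ℂ[X], p.degree < ↑(t + 1) ∧ ∀ x : ℝ, f x = p.eval (x : ℂ) := by
  set r := antiderivative q
  have hr : ∀ x : ℝ, HasDerivAt (fun y : ℝ => r.eval (y : ℂ)) (q.eval (x : ℂ)) x := fun x => by
    simpa [r] using (r.hasDerivAt (x : ℂ)).comp_ofReal
  have hconst : ∀ x : ℝ, f x - r.eval (x : ℂ) = f 0 - r.eval 0 := fun x => by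
    simpa using is_const_of_deriv_eq_zero
      (fun y => ((hf y).sub (hr y)).differentiableAt)
      (fun y => by simpa using ((hf y).sub (hr y)).deriv) x 0
  refine ⟨r + C (f 0 - r.eval 0), ?_, fun x => ?_⟩
  · exact (degree_add_le _ _).trans_lt (max_lt (degree_antiderivative_lt hq)
      (degree_C_le.trans_lt (by exact_mod_cast Nat.succ_pos t)))
  · rw [eval_add, eval_C, ← hconst x]
    ring

section EntrywiseDeriv

variable {ι κ μ ν : Type*} [Fintype κ] [Fintype μ]

def HasEntrywiseDerivAt (P : ℝ → Matrix ι κ ℂ) (P' : Matrix ι κ ℂ) (x : ℝ) : Prop :=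
  ∀ i j, HasDerivAt (fun y => P y i j) (P' i j) x

theorem HasEntrywiseDerivAt.const_mul_mul_const {P : ℝ → Matrix κ μ ℂ} {P' : Matrix κ μ ℂ}
    {x : ℝ} (h : HasEntrywiseDerivAt P P' x) (M : Matrix ι κ ℂ) (N : Matrix μ ν ℂ) :
    HasEntrywiseDerivAt (fun y => M * P y * N) (M * P' * N) x := fun i j => by
  simp only [mul_apply]
  exact HasDerivAt.fun_sum fun b _ =>
    (HasDerivAt.fun_sum fun a _ => (h a b).const_mul (M i a)).mul_const (N b j)

theorem HasEntrywiseDerivAt.mul_diagonal [DecidableEq κ] {P : ℝ → Matrix ι κ ℂ}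
    {P' : Matrix ι κ ℂ} {e : ℝ → κ → ℂ} {e' : κ → ℂ} {x : ℝ}
    (hP : HasEntrywiseDerivAt P P' x) (he : ∀ k, HasDerivAt (fun y => e y k) (e' k) x) :
    HasEntrywiseDerivAt (fun y => P y * diagonal (e y))
      (P' * diagonal (e x) + P x * diagonal e') x := fun i j => by
  simpa only [Matrix.mul_diagonal, Matrix.add_apply] using (hP i j).fun_mul (he j)

end EntrywiseDeriv

section

variable {ι κ : Type*} [Fintype ι] [DecidableEq ι] [Fintype κ] [DecidableEq κ]

open Complex in
theorem hasEntrywiseDerivAt_mul_exp_diagonal {A : Matrix ι ι ℂ} {d : κ → ℂ}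
    {Pm : ℝ → Matrix ι κ ℂ} (hPm : ∀ x, HasEntrywiseDerivAt Pm (-I • (A * Pm x * diagonal d)) x)
    (lam : ℂ) (x : ℝ) :
    HasEntrywiseDerivAt (fun y => Pm y * diagonal fun k => exp (I * lam * y * d k))
      (-I • ((A - lam • 1) * (Pm x * diagonal fun k => exp (I * lam * x * d k)) * diagonal d))
      x := by
  have hexp : ∀ k, HasDerivAt (fun y : ℝ => exp (I * lam * y * d k))
      (exp (I * lam * x * d k) * (I * lam * d k)) x := fun k => by
    simpa using ((((hasDerivAt_id x).ofReal_comp).const_mul (I * lam)).mul_const (d k)).cexp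
  convert (hPm x).mul_diagonal hexp using 1
  ext i j
  simp only [← Matrix.mul_assoc, Matrix.sub_mul, Matrix.smul_mul, Matrix.one_mul,
    Matrix.mul_diagonal, Matrix.smul_apply, Matrix.sub_apply, Matrix.add_apply, smul_eq_mul]
  ring

theorem exists_polynomial_entry_of_pow_eq_zero {N : Matrix ι ι ℂ} {D : Matrix κ κ ℂ} {c : ℂ}
    {P : ℝ → Matrix ι κ ℂ} (hP : ∀ x, HasEntrywiseDerivAt P (c • (N * P x * D)) x) {r : ℕ}
    (hN : N ^ r = 0) (i : ι) (j : κ) :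
    ∃ p : ℂ[X], p.degree < r ∧ ∀ x : ℝ, P x i j = p.eval (x : ℂ) := by
  suffices key : ∀ t k : ℕ, N ^ (k + t) = 0 → ∀ i j, ∃ p : ℂ[X], p.degree < t ∧
      ∀ x : ℝ, (N ^ k * P x * D ^ k) i j = p.eval (x : ℂ) by
    simpa using key r 0 (by simpa using hN) i j
  intro t
  induction t with
  | zero =>
    intro k hk i j
    rw [add_zero] at hk
    exact ⟨0, by simp, fun x => by simp [hk]⟩
  | succ t ih =>
    intro k hk i j
    obtain ⟨q, hq_deg, hq⟩ := ih (k + 1) (by rwa [add_right_comm, add_assoc]) i j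
    have hderiv : ∀ x : ℝ, HasDerivAt (fun y => (N ^ k * P y * D ^ k) i j)
        ((c • q).eval (x : ℂ)) x := fun x => by
      have hshift :
          N ^ k * (c • (N * P x * D)) * D ^ k = c • (N ^ (k + 1) * P x * D ^ (k + 1)) := by
        rw [pow_succ N, pow_succ' D]
        simp only [Matrix.mul_smul, Matrix.smul_mul, Matrix.mul_assoc]
      have h := (hP x).const_mul_mul_const (N ^ k) (D ^ k) i j
      rwa [hshift, Matrix.smul_apply, hq, ← eval_smul] at h
    exact exists_polynomial_eq_of_hasDerivAt ((degree_smul_le _ _).trans_lt hq_deg) hderiv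

end

/-- If `Π′ = −iAΠD`, then `P(x) = Π(x)e^{iλxD}` satisfies `P′ = −i(A−λI)PD`;
consequently, if `(A−λI)ⁿ = 0`, every entry of `P(x)` is a polynomial in `x` of degree
less than `n`. -/
theorem stmt_19 {n m : ℕ}
    (A : Matrix (Fin n) (Fin n) ℂ) (lam : ℂ)
    (d : Fin m → ℝ)
    (D : Matrix (Fin m) (Fin m) ℂ)
    (hD : D = Matrix.diagonal (fun k => (d k : ℂ)))
    (Pm : ℝ → Matrix (Fin n) (Fin m) ℂ)
    (hPm : ∀ x i j, HasDerivAt (fun y => Pm y i j)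
      (((-Complex.I) • (A * Pm x * D)) i j) x)
    (E : ℝ → Matrix (Fin m) (Fin m) ℂ)
    (hE : ∀ x, E x = Matrix.diagonal
      (fun k => Complex.exp (Complex.I * lam * (x : ℂ) * (d k : ℂ)))) :
    (∀ x i j, HasDerivAt (fun y => (Pm y * E y) i j)
      ((((-Complex.I) • ((A - lam • 1) * (Pm x * E x) * D) :
          Matrix (Fin n) (Fin m) ℂ)) i j) x)
    ∧ ((A - lam • 1) ^ n = 0 →
        ∀ i j, ∃ p : Polynomial ℂ, p.degree < n
          ∧ ∀ x : ℝ, (Pm x * E x) i j = p.eval (x : ℂ)) := by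
  obtain rfl : E = _ := funext hE
  subst hD
  have hP := hasEntrywiseDerivAt_mul_exp_diagonal hPm lam
  exact ⟨hP, fun hnil => exists_polynomial_entry_of_pow_eq_zero hP hnil⟩
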